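/- Let 1 ≤ m, let A ∈ Mat_m(ℂ) have columns x₁,…,x_m each of Euclidean norm at most 1, and suppose |det A| ≥ κ for some κ > 0. Let v ∈ ℂ^m and δ > 0, and suppose that for every subset J ⊆ [m] with |J| = m−1 one has |det((v, A_J))| < δ, where (v, A_J) denotes the m×m matrix whose first column is v and whose remaining columns are the columns {x_j : j ∈ J} of A. Then ‖v‖₂ < m·δ/κ. -/

import Mathlib

/-!
For `J = [m] ∖ {j}` the matrix `(v, A_J)` is a column permutation of `A` with column `j`
replaced by `v`, so by Cramer's rule `|det (v, A_J)| = |det A| · |cⱼ|`, where `v = ∑ cⱼ xⱼ`.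
Hence `|det A| · ‖v‖ ≤ ∑ |det A| · |cⱼ| · ‖xⱼ‖ < m δ`.
-/

noncomputable section

/-- Euclidean norm of a finitely-indexed complex vector. -/
def evnorm {ι : Type*} [Fintype ι] (v : ι → ℂ) : ℝ :=
  Real.sqrt (∑ i, Complex.normSq (v i))

/-- The `m×m` matrix `(v, A_J)` whose first column is `v` and whose remaining columns are the
columns of `A` indexed by `J` (in increasing order), where `|J| = m − 1`. -/
def firstColMat {m : ℕ} (A : Matrix (Fin m) (Fin m) ℂ) (v : Fin m → ℂ)
    (J : Finset (Fin m)) (hJ : J.card = m - 1) : Matrix (Fin m) (Fin m) ℂ :=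
  Matrix.of fun i c =>
    if hc : (c : ℕ) = 0 then v i
    else A i (J.orderEmbOfFin hJ ⟨(c : ℕ) - 1, by have h1 := c.isLt; omega⟩)

theorem evnorm_eq_norm_toLp {ι : Type*} [Fintype ι] (v : ι → ℂ) :
    evnorm v = ‖WithLp.toLp 2 v‖ := by
  simp only [evnorm, EuclideanSpace.norm_eq, Complex.sq_norm]

theorem Matrix.norm_det_submatrix_id_of_injective {n : Type*} [Fintype n] [DecidableEq n]
    (M : Matrix n n ℂ) {g : n → n} (hg : Function.Injective g) :
    ‖(M.submatrix id g).det‖ = ‖M.det‖ := by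
  obtain ⟨σ, rfl⟩ : ∃ σ : Equiv.Perm n, ⇑σ = g := ⟨.ofBijective g hg.bijective_of_finite, rfl⟩
  rcases Int.units_eq_one_or (Equiv.Perm.sign σ) with hs | hs <;> simp [M.det_permute', hs]

def firstColIndex {m : ℕ} (J : Finset (Fin m)) (hJ : J.card = m - 1) (j : Fin m) :
    Fin m → Fin m := fun c =>
  if hc : (c : ℕ) = 0 then j
  else J.orderEmbOfFin hJ ⟨(c : ℕ) - 1, by have := c.isLt; omega⟩

theorem firstColIndex_injective {m : ℕ} {J : Finset (Fin m)} (hJ : J.card = m - 1) {j : Fin m}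
    (hj : j ∉ J) : Function.Injective (firstColIndex J hJ j) := by
  intro a b hab
  unfold firstColIndex at hab
  by_cases ha : (a : ℕ) = 0 <;> by_cases hb : (b : ℕ) = 0 <;>
    simp only [ha, hb, dite_true, dite_false] at hab
  · exact Fin.ext (ha.trans hb.symm)
  · exact absurd (hab ▸ J.orderEmbOfFin_mem hJ _) hj
  · exact absurd (hab ▸ J.orderEmbOfFin_mem hJ _) hj
  · have := congrArg Fin.val ((J.orderEmbOfFin hJ).injective hab)
    exact Fin.ext (by simp only at this; omega)

theorem firstColMat_eq_submatrix_updateCol {m : ℕ} (A : Matrix (Fin m) (Fin m) ℂ)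
    (v : Fin m → ℂ) {J : Finset (Fin m)} (hJ : J.card = m - 1) {j : Fin m} (hj : j ∉ J) :
    firstColMat A v J hJ = (A.updateCol j v).submatrix id (firstColIndex J hJ j) := by
  ext i c
  simp only [firstColMat, firstColIndex, Matrix.of_apply, Matrix.submatrix_apply, id_eq]
  by_cases hc : (c : ℕ) = 0
  · simp [hc]
  · have hne : J.orderEmbOfFin hJ ⟨(c : ℕ) - 1, by omega⟩ ≠ j :=
      fun h => hj (h ▸ J.orderEmbOfFin_mem hJ _)
    simp [hc, Matrix.updateCol_ne hne]

theorem norm_det_firstColMat {m : ℕ} (A : Matrix (Fin m) (Fin m) ℂ) (v : Fin m → ℂ)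
    {J : Finset (Fin m)} (hJ : J.card = m - 1) {j : Fin m} (hj : j ∉ J) :
    ‖(firstColMat A v J hJ).det‖ = ‖(A.updateCol j v).det‖ := by
  rw [firstColMat_eq_submatrix_updateCol A v hJ hj,
    Matrix.norm_det_submatrix_id_of_injective _ (firstColIndex_injective hJ hj)]

theorem Matrix.norm_det_mul_norm_le_sum {𝕜 n : Type*} [RCLike 𝕜] [Fintype n] [DecidableEq n]
    (A : Matrix n n 𝕜) (v : n → 𝕜) :
    ‖A.det‖ * ‖WithLp.toLp 2 v‖ ≤
      ∑ j, ‖(A.updateCol j v).det‖ * ‖WithLp.toLp 2 fun i => A i j‖ := by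
  have cramer_rule : WithLp.toLp 2 (A.det • v) =
      ∑ j, A.cramer v j • WithLp.toLp 2 fun i => A i j := by
    ext i
    simpa [Matrix.mulVec, dotProduct, mul_comm] using (congrFun (A.mulVec_cramer v) i).symm
  calc ‖A.det‖ * ‖WithLp.toLp 2 v‖ = ‖WithLp.toLp 2 (A.det • v)‖ := by
        rw [WithLp.toLp_smul, norm_smul]
    _ ≤ _ := by
        rw [cramer_rule]
        refine (norm_sum_le _ _).trans_eq ?_
        simp only [norm_smul, Matrix.cramer_apply]

theorem small_vector_of_small_determinants_general (m : ℕ) (hm : 1 ≤ m)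
    (A : Matrix (Fin m) (Fin m) ℂ)
    (hcol : ∀ j : Fin m, evnorm (fun i => A i j) ≤ 1)
    (κ : ℝ) (hκ : 0 < κ) (hdet : κ ≤ ‖A.det‖)
    (v : Fin m → ℂ) (δ : ℝ)
    (h : ∀ (J : Finset (Fin m)) (hJ : J.card = m - 1),
      ‖Matrix.det (firstColMat A v J hJ)‖ < δ) :
    evnorm v < m * δ / κ := by
  have hupdate : ∀ j, ‖(A.updateCol j v).det‖ < δ := fun j => by
    have hJ : ({j}ᶜ : Finset (Fin m)).card = m - 1 := by simp [Finset.card_compl]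
    simpa [norm_det_firstColMat A v hJ (Finset.notMem_compl.2 (Finset.mem_singleton_self j))]
      using h _ hJ
  have hsum : ‖A.det‖ * evnorm v < m * δ := by
    have : Nonempty (Fin m) := ⟨⟨0, hm⟩⟩
    calc ‖A.det‖ * evnorm v
        ≤ ∑ j, ‖(A.updateCol j v).det‖ * evnorm (fun i => A i j) := by
          simpa only [evnorm_eq_norm_toLp] using A.norm_det_mul_norm_le_sum v
      _ < ∑ _j : Fin m, δ * 1 :=
          Finset.sum_lt_sum_of_nonempty Finset.univ_nonempty fun j _ =>
            mul_lt_mul_of_lt_of_le_of_nonneg_of_pos (hupdate j) (hcol j) (norm_nonneg _) one_pos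
      _ = m * δ := by simp
  rw [lt_div_iff₀ hκ]
  nlinarith [evnorm_eq_norm_toLp v ▸ norm_nonneg (WithLp.toLp 2 v)]

/-- **Small coefficients lemma** (Lemma 7.10): if a well-conditioned system of unit columns
almost annihilates `v` in every coordinate hyperplane determinant, then `v` is small. -/
theorem small_vector_of_small_determinants (m : ℕ) (hm : 1 ≤ m)
    (A : Matrix (Fin m) (Fin m) ℂ)
    (hcol : ∀ j : Fin m, evnorm (fun i => A i j) ≤ 1)
    (κ : ℝ) (hκ : 0 < κ) (hdet : κ ≤ ‖A.det‖)
    (v : Fin m → ℂ) (δ : ℝ) (hδ : 0 < δ)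
    (h : ∀ (J : Finset (Fin m)) (hJ : J.card = m - 1),
      ‖Matrix.det (firstColMat A v J hJ)‖ < δ) :
    evnorm v < m * δ / κ :=
  small_vector_of_small_determinants_general m hm A hcol κ hκ hdet v δ h

end
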